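/- arXiv:2501.07277 — 5 statements merged into one kernel-verified Lean document; each statement's English description precedes it below -/
import Mathlib

section
/- The number of lattice paths from (x1,y1) to (x2,y2) using only North steps (0,1) and East steps (1,0) that never visit a point strictly below the diagonal y=x equals C(α+β, β) − C(α+β, β−δ−1), where δ = y1−x1, α = y2−y1, β = x2−x1. -/
/-- Binomial coefficient `C(n,r)` for integer arguments, with the convention
that it is `0` when `r < 0` (and, via `Nat.choose`, when `r > n`). -/
def ibinom (n r : ℤ) : ℕ := if 0 ≤ r then n.toNat.choose r.toNat else 0

/-- `L` (with `true` = North step `(0,1)`, `false` = East step `(1,0)`) is a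
NE upper path from `(x1,y1)` to `(x2,y2)`: it has the right numbers of North and
East steps, and never visits a point strictly below the diagonal `y = x`. -/
def IsNEPath (x1 y1 x2 y2 : ℤ) (L : List Bool) : Prop :=
  ((L.count true : ℤ) = y2 - y1) ∧ ((L.count false : ℤ) = x2 - x1) ∧
  ∀ j : ℕ, x1 + ((L.take j).count false : ℤ) ≤ y1 + ((L.take j).count true : ℤ)

/-- Finset of all Bool lists of length `n`. -/
def F : ℕ → Finset (List Bool)
  | 0 => {[]}
  | n+1 => (F n).image (List.cons true) ∪ (F n).image (List.cons false)

lemma mem_F : ∀ {n : ℕ} {L : List Bool}, L ∈ F n ↔ L.length = n := by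
  intro n
  induction n with
  | zero => intro L; simp [F, List.length_eq_zero_iff]
  | succ n ih =>
    intro L
    constructor
    · intro h
      simp only [F, Finset.mem_union, Finset.mem_image] at h
      rcases h with ⟨a, ha, rfl⟩ | ⟨a, ha, rfl⟩ <;> simp [ih.1 ha]
    · intro h
      cases L with
      | nil => simp at h
      | cons b t =>
        simp only [F, Finset.mem_union, Finset.mem_image]
        cases b
        · right; exact ⟨t, ih.2 (by simpa using h), rfl⟩
        · left; exact ⟨t, ih.2 (by simpa using h), rfl⟩

def P (δ α β : ℕ) (L : List Bool) : Prop :=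
  L.count true = α ∧ L.count false = β ∧
    ∀ j ∈ Finset.range (L.length + 1),
      (L.take j).count false ≤ δ + (L.take j).count true

instance (δ α β : ℕ) : DecidablePred (P δ α β) := fun _ => by
  unfold P; infer_instance

def N (δ α β : ℕ) : ℕ := ((F (α + β)).filter (P δ α β)).card

lemma P_forall (δ : ℕ) (L : List Bool) :
    (∀ j ∈ Finset.range (L.length + 1),
        (L.take j).count false ≤ δ + (L.take j).count true)
      ↔ ∀ j : ℕ, (L.take j).count false ≤ δ + (L.take j).count true := by
  constructor
  · intro h j
    rcases le_or_gt j L.length with hj | hj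
    · exact h j (Finset.mem_range.mpr (by omega))
    · rw [List.take_of_length_le (by omega)]
      have := h L.length (by simp)
      rwa [List.take_length] at this
  · intro h j _; exact h j

lemma filter_F_succ (n : ℕ) (p : List Bool → Prop) [DecidablePred p] :
    ((F (n+1)).filter p).card
      = ((F n).filter (fun L => p (true :: L))).card
        + ((F n).filter (fun L => p (false :: L))).card := by
  have hinj : ∀ b : Bool, Function.Injective (List.cons b) := by
    intro b x y h; injection h
  show ((((F n).image (List.cons true)) ∪ ((F n).image (List.cons false))).filter p).card = _
  rw [Finset.filter_union, Finset.card_union_of_disjoint, Finset.filter_image,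
    Finset.filter_image,
    Finset.card_image_of_injective _ (hinj true),
    Finset.card_image_of_injective _ (hinj false)]
  · apply Finset.disjoint_left.2
    intro a ha hb
    simp only [Finset.mem_filter, Finset.mem_image] at ha hb
    rcases ha.1 with ⟨x, _, rfl⟩
    rcases hb.1 with ⟨y, _, h⟩
    simp at h

lemma P_cons_true (δ α β : ℕ) (L : List Bool) :
    P δ (α+1) β (true :: L) ↔ P (δ+1) α β L := by
  unfold P
  simp only [List.count_cons, List.length_cons, Finset.mem_range]
  norm_num
  intro _ _
  constructor
  · intro h j hj
    have := h (j+1) (by omega)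
    simp only [List.take_succ_cons, List.count_cons] at this
    simp at this
    omega
  · intro h j hj
    match j with
    | 0 => simp
    | (k+1) =>
      have := h k (by omega)
      simp only [List.take_succ_cons, List.count_cons]
      simp
      omega

lemma P_cons_false (δ α β : ℕ) (L : List Bool) :
    P (δ+1) α (β+1) (false :: L) ↔ P δ α β L := by
  unfold P
  simp only [List.count_cons, List.length_cons, Finset.mem_range]
  norm_num
  intro _ _
  constructor
  · intro h j hj
    have := h (j+1) (by omega)
    simp only [List.take_succ_cons, List.count_cons] at this
    simp at this
    omega
  · intro h j hj
    match j with
    | 0 => simp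
    | (k+1) =>
      have := h k (by omega)
      simp only [List.take_succ_cons, List.count_cons]
      simp
      omega

lemma not_P_cons_true_zero (δ β : ℕ) (L : List Bool) : ¬ P δ 0 β (true :: L) := by
  unfold P; simp [List.count_cons]

lemma not_P_cons_false_zero_beta (δ α : ℕ) (L : List Bool) : ¬ P δ α 0 (false :: L) := by
  unfold P; simp [List.count_cons]

lemma not_P_cons_false_zero_delta (α β : ℕ) (L : List Bool) : ¬ P 0 α β (false :: L) := by
  unfold P
  rintro ⟨-, -, h⟩
  have := h 1 (by simp)
  simp [List.count_cons] at this

lemma P_nil (δ : ℕ) : P δ 0 0 [] := by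
  unfold P; simp

/-- Base case: no east steps. -/
lemma N_alpha_zero (δ α : ℕ) : N δ α 0 = 1 := by
  induction α generalizing δ with
  | zero =>
    show (({[]} : Finset (List Bool)).filter (P δ 0 0)).card = 1
    rw [Finset.filter_singleton, if_pos (P_nil δ)]; rfl
  | succ α ih =>
    show ((F (α+1)).filter (P δ (α+1) 0)).card = 1
    rw [filter_F_succ]
    have h2 : ((F α).filter (fun L => P δ (α+1) 0 (false :: L))) = ∅ := by
      apply Finset.filter_false_of_mem
      intro L _
      exact not_P_cons_false_zero_beta δ (α+1) L
    rw [h2]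
    have h1 : ((F α).filter (fun L => P δ (α+1) 0 (true :: L)))
        = ((F α).filter (P (δ+1) α 0)) := by
      apply Finset.filter_congr
      intro L _
      simp [P_cons_true (δ := δ) (α := α) (β := 0) L]
    rw [h1]
    simpa [N] using ih (δ+1)

/-- Base case: no north steps. -/
lemma N_beta_zero (δ β : ℕ) : N δ 0 β = if β ≤ δ then 1 else 0 := by
  induction β generalizing δ with
  | zero =>
    show (({[]} : Finset (List Bool)).filter (P δ 0 0)).card = _
    rw [Finset.filter_singleton, if_pos (P_nil δ)]; simp
  | succ β ih =>
    unfold N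
    rw [Nat.zero_add, filter_F_succ]
    have h1 : ((F β).filter (fun L => P δ 0 (β+1) (true :: L))) = ∅ := by
      apply Finset.filter_false_of_mem
      intro L _
      exact not_P_cons_true_zero δ (β+1) L
    rw [h1]
    match δ with
    | 0 =>
      have h2 : ((F β).filter (fun L => P 0 0 (β+1) (false :: L))) = ∅ := by
        apply Finset.filter_false_of_mem
        intro L _
        exact not_P_cons_false_zero_delta 0 (β+1) L
      rw [h2]; simp
    | (δ'+1) =>
      have h2 : ((F β).filter (fun L => P (δ'+1) 0 (β+1) (false :: L)))
          = ((F β).filter (P δ' 0 β)) := by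
        apply Finset.filter_congr
        intro L _
        simp [P_cons_false (δ := δ') (α := 0) (β := β) L]
      rw [h2]
      have := ih δ'
      unfold N at this
      simp only [Finset.card_empty, Nat.zero_add]
      simp only [Nat.zero_add] at this
      rw [this]
      by_cases h : β ≤ δ' <;> simp [h]

/-- Recursion, interior case. -/
lemma N_rec (δ α β : ℕ) :
    N (δ+1) (α+1) (β+1) = N (δ+2) α (β+1) + N δ (α+1) β := by
  unfold N
  rw [show (α+1+(β+1)) = (α+(β+1))+1 from by omega, filter_F_succ]
  congr 1
  · rw [Finset.filter_congr
      (fun L _ => by simpa using (P_cons_true (δ+1) α (β+1) L))]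
  · rw [Finset.filter_congr
      (fun L _ => by simpa using (P_cons_false δ (α+1) β L)),
      show (α+(β+1)) = (α+1+β) from by omega]

/-- Recursion, boundary case: cannot start with an east step. -/
lemma N_rec_zero (α β : ℕ) :
    N 0 (α+1) (β+1) = N 1 α (β+1) := by
  unfold N
  rw [show (α+1+(β+1)) = (α+(β+1))+1 from by omega, filter_F_succ]
  have h2 : ((F (α+(β+1))).filter (fun L => P 0 (α+1) (β+1) (false :: L))) = ∅ :=
    Finset.filter_false_of_mem (fun L _ => not_P_cons_false_zero_delta (α+1) (β+1) L)
  rw [h2, Finset.filter_congr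
      (fun L _ => by simpa using (P_cons_true 0 α (β+1) L))]
  simp


/-- The "bad path" correction term. -/
def T (δ β n : ℕ) : ℕ := if δ < β then n.choose (β - δ - 1) else 0

lemma pascal (m k : ℕ) : (m+1).choose (k+1) = m.choose k + m.choose (k+1) :=
  Nat.choose_succ_succ m k

lemma T_rec (δ β m : ℕ) :
    T (δ+1) (β+1) (m+1) + m.choose (β+1) + m.choose β
      = (m+1).choose (β+1) + T (δ+2) (β+1) m + T δ β m := by
  rcases Nat.lt_or_ge δ β with h | h
  · obtain ⟨k, rfl⟩ : ∃ k, β = δ+1+k := ⟨β-δ-1, by omega⟩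
    have e1 : T (δ+1) (δ+1+k+1) (m+1) = (m+1).choose k := by
      unfold T; rw [if_pos (by omega)]; congr 1; omega
    have e3 : T δ (δ+1+k) m = m.choose k := by
      unfold T; rw [if_pos (by omega)]; congr 1; omega
    rw [e1, e3]
    match k with
    | 0 =>
      have e2 : T (δ+2) (δ+1+0+1) m = 0 := by unfold T; rw [if_neg (by omega)]
      rw [e2]
      simp only [Nat.add_zero]
      have h1 := pascal m (δ+1)
      simp only [Nat.choose_zero_right]
      omega
    | (k'+1) =>
      have e2 : T (δ+2) (δ+1+(k'+1)+1) m = m.choose k' := by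
        unfold T; rw [if_pos (by omega)]; congr 1; omega
      rw [e2]
      have h1 := pascal m (δ+1+(k'+1))
      have h2 := pascal m k'
      omega
  · have e1 : T (δ+1) (β+1) (m+1) = 0 := by unfold T; rw [if_neg (by omega)]
    have e2 : T (δ+2) (β+1) m = 0 := by unfold T; rw [if_neg (by omega)]
    have e3 : T δ β m = 0 := by unfold T; rw [if_neg (by omega)]
    rw [e1, e2, e3]
    have h1 := pascal m β
    omega

lemma T_rec_zero (β m : ℕ) :
    T 0 (β+1) (m+1) + m.choose (β+1) = T 1 (β+1) m + (m+1).choose (β+1) := by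
  have e1 : T 0 (β+1) (m+1) = (m+1).choose β := by
    unfold T; rw [if_pos (by omega)]
    simp only [Nat.sub_zero, Nat.add_sub_cancel]
  rw [e1]
  match β with
  | 0 =>
    have e2 : T 1 (0+1) m = 0 := by unfold T; rw [if_neg (by omega)]
    rw [e2]
    have h0 := pascal m 0
    simp only [Nat.choose_zero_right] at *
    omega
  | (β'+1) =>
    have e2 : T 1 (β'+1+1) m = m.choose β' := by
      unfold T; rw [if_pos (by omega)]
      simp only [Nat.add_sub_cancel]
    rw [e2]
    have h0 := pascal m (β'+1)
    have h1 := pascal m β'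
    omega

lemma main_count (n : ℕ) : ∀ δ α β : ℕ, α + β = n → β ≤ α + δ →
    N δ α β + T δ β n = n.choose β := by
  induction n using Nat.strong_induction_on with
  | _ n ih =>
    intro δ α β hn hle
    match β, α, δ with
    | 0, α, δ => simp [N_alpha_zero, T]
    | (β+1), 0, δ =>
      rw [N_beta_zero, if_pos (by omega)]
      unfold T
      rw [if_neg (by omega), ← hn]
      simp
    | (β+1), (α+1), 0 =>
      subst hn
      rw [N_rec_zero, show α+1+(β+1) = (α+(β+1))+1 from by omega]
      have h1 := ih (α+(β+1)) (by omega) 1 α (β+1) rfl (by omega)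
      have h2 := T_rec_zero β (α+(β+1))
      omega
    | (β+1), (α+1), (δ+1) =>
      subst hn
      rw [N_rec, show α+1+(β+1) = (α+(β+1))+1 from by omega]
      have h1 := ih (α+(β+1)) (by omega) (δ+2) α (β+1) rfl (by omega)
      have h2 := ih (α+1+β) (by omega) δ (α+1) β rfl (by omega)
      rw [show α+1+β = α+(β+1) from by omega] at h2
      have h3 := T_rec δ β (α+(β+1))
      omega

lemma length_eq_counts (L : List Bool) : L.length = L.count true + L.count false := by
  induction L with
  | nil => simp
  | cons b t ih => cases b <;> simp [List.count_cons] <;> omega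

theorem stmt_0 (x1 y1 x2 y2 : ℤ) (hx : x1 ≤ x2) (hy : y1 ≤ y2)
    (h1 : x1 ≤ y1) (h2 : x2 ≤ y2) :
    (Nat.card {L : List Bool // IsNEPath x1 y1 x2 y2 L} : ℤ) =
      (ibinom ((y2 - y1) + (x2 - x1)) (x2 - x1) : ℤ)
        - ibinom ((y2 - y1) + (x2 - x1)) ((x2 - x1) - (y1 - x1) - 1) := by
  obtain ⟨δ, hδ'⟩ : ∃ δ : ℕ, (δ : ℤ) = y1 - x1 := ⟨(y1 - x1).toNat, by omega⟩
  obtain ⟨α, hα'⟩ : ∃ α : ℕ, (α : ℤ) = y2 - y1 := ⟨(y2 - y1).toNat, by omega⟩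
  obtain ⟨β, hβ'⟩ : ∃ β : ℕ, (β : ℤ) = x2 - x1 := ⟨(x2 - x1).toNat, by omega⟩
  have hle : β ≤ α + δ := by omega
  have key : ∀ L : List Bool,
      IsNEPath x1 y1 x2 y2 L ↔ L ∈ (F (α+β)).filter (P δ α β) := by
    intro L
    rw [Finset.mem_filter, mem_F]
    unfold IsNEPath P
    constructor
    · rintro ⟨c1, c2, c3⟩
      have e1 : L.count true = α := by omega
      have e2 : L.count false = β := by omega
      refine ⟨by rw [length_eq_counts, e1, e2], e1, e2, ?_⟩
      rw [P_forall]
      intro j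
      have := c3 j
      omega
    · rintro ⟨hlen, e1, e2, hcond⟩
      rw [P_forall] at hcond
      exact ⟨by omega, by omega, fun j => by have := hcond j; omega⟩
  have hcard : Nat.card {L : List Bool // IsNEPath x1 y1 x2 y2 L} = N δ α β := by
    rw [Nat.card_congr (Equiv.subtypeEquivRight key)]
    exact Nat.card_eq_finsetCard _
  rw [hcard]
  have hmain := main_count (α+β) δ α β rfl hle
  have hib1 : ibinom ((y2 - y1) + (x2 - x1)) (x2 - x1) = (α+β).choose β := by
    unfold ibinom
    rw [if_pos (by omega)]
    congr 1 <;> omega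
  have hib2 : ibinom ((y2 - y1) + (x2 - x1)) ((x2 - x1) - (y1 - x1) - 1)
      = T δ β (α+β) := by
    unfold ibinom T
    by_cases hc : δ < β
    · rw [if_pos (by omega), if_pos hc]
      congr 1 <;> omega
    · rw [if_neg (by omega), if_neg hc]
  rw [hib1, hib2]
  omega
end

section
/- The number of lattice paths from (x1,y1) to (x2,y2) consisting of North steps (0,1) and East steps (1,0) that visit at least one point strictly below the diagonal y=x equals C(α+β, β−δ−1), where δ = y1−x1 ≥ 0, α = y2−y1, β = x2−x1. -/
/-- `L` (with `true` = North step `(0,1)`, `false` = East step `(1,0)`) is a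
lattice path from `(x1,y1)` to `(x2,y2)` (no diagonal condition). -/
def IsNEWalk (x1 y1 x2 y2 : ℤ) (L : List Bool) : Prop :=
  ((L.count true : ℤ) = y2 - y1) ∧ ((L.count false : ℤ) = x2 - x1)

/-- The path starting at `(x1,y1)` visits a point strictly below the diagonal `y = x`. -/
def GoesBelow (x1 y1 : ℤ) (L : List Bool) : Prop :=
  ∃ j : ℕ, y1 + ((L.take j).count true : ℤ) < x1 + ((L.take j).count false : ℤ)

namespace Stmt1Aux

open List

/-! ### Counting lists with prescribed numbers of `true`s and `false`s -/

abbrev TT (a b : ℕ) := {L : List Bool // L.count true = a ∧ L.count false = b}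

lemma TT_len {a b : ℕ} (L : TT a b) : L.1.length = a + b := by
  have := List.count_true_add_count_false L.1
  omega

instance TT_finite (a b : ℕ) : Finite (TT a b) := by
  haveI : Finite {l : List Bool // l.length = a + b} :=
    (inferInstance : Finite (List.Vector Bool (a+b)))
  apply Finite.of_injective
    (fun L : TT a b => (⟨L.1, TT_len L⟩ : {l : List Bool // l.length = a + b}))
  intro L M h
  simpa [Subtype.ext_iff] using h

lemma TT_unique_true (a : ℕ) : Nat.card (TT a 0) = 1 := by
  have huniq : ∀ L : List Bool, L.count true = a → L.count false = 0 →
      L = List.replicate a true := by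
    intro L h1 h2
    rw [List.eq_replicate_iff]
    refine ⟨by have := List.count_true_add_count_false L; omega, ?_⟩
    intro x hx
    cases x
    · exact absurd (List.count_pos_iff.mpr hx) (by omega)
    · rfl
  have : Unique (TT a 0) := {
    default := ⟨List.replicate a true, by simp [List.count_replicate]⟩
    uniq := fun ⟨L, h1, h2⟩ => Subtype.ext (huniq L h1 h2) }
  simp [Nat.card_unique]

lemma TT_unique_false (b : ℕ) : Nat.card (TT 0 b) = 1 := by
  have huniq : ∀ L : List Bool, L.count true = 0 → L.count false = b →
      L = List.replicate b false := by
    intro L h1 h2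
    rw [List.eq_replicate_iff]
    refine ⟨by have := List.count_true_add_count_false L; omega, ?_⟩
    intro x hx
    cases x
    · rfl
    · exact absurd (List.count_pos_iff.mpr hx) (by omega)
  have : Unique (TT 0 b) := {
    default := ⟨List.replicate b false, by simp [List.count_replicate]⟩
    uniq := fun ⟨L, h1, h2⟩ => Subtype.ext (huniq L h1 h2) }
  simp [Nat.card_unique]

def TT_cons_equiv (a b : ℕ) : TT (a+1) (b+1) ≃ (TT a (b+1)) ⊕ (TT (a+1) b) where
  toFun := fun ⟨L, h⟩ => match L, h with
    | true :: t, h => Sum.inl ⟨t, by simp at h; omega⟩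
    | false :: t, h => Sum.inr ⟨t, by simp at h; omega⟩
  invFun := fun
    | Sum.inl ⟨t, h⟩ => ⟨true :: t, by simp; omega⟩
    | Sum.inr ⟨t, h⟩ => ⟨false :: t, by simp; omega⟩
  left_inv := by rintro ⟨(_|⟨(_|_), t⟩), h⟩ <;> simp at h ⊢
  right_inv := by rintro (⟨t, h⟩ | ⟨t, h⟩) <;> simp

lemma card_TT (a b : ℕ) : Nat.card (TT a b) = (a + b).choose b := by
  induction a generalizing b with
  | zero => simpa using TT_unique_false b
  | succ a ih =>
    induction b with
    | zero => simpa using TT_unique_true (a+1)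
    | succ b ihb =>
      rw [Nat.card_congr (TT_cons_equiv a b), Nat.card_sum, ih (b+1), ihb]
      have e1 : a + (b+1) = a+b+1 := by omega
      have e2 : a+1+b = a+b+1 := by omega
      have e3 : a+1+(b+1) = (a+b+1)+1 := by omega
      rw [e1, e2, e3]
      exact (add_comm _ _).trans (Nat.choose_succ_succ _ _).symm

/-! ### The walk function and the reflection map -/

def wk (s : Bool) (L : List Bool) (j : ℕ) : ℤ :=
  (((L.take j).count s : ℤ)) - (((L.take j).count (!s) : ℤ))

def refl' (L : List Bool) (j : ℕ) : List Bool := (L.take j).map (!·) ++ L.drop j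

@[simp] lemma wk_zero (s : Bool) (L : List Bool) : wk s L 0 = 0 := by simp [wk]

lemma wk_succ_le (s : Bool) (L : List Bool) (j : ℕ) : wk s L (j+1) ≤ wk s L j + 1 := by
  simp only [wk, List.take_succ, List.count_append]
  rcases h : L[j]? with _ | x
  · simp
  · cases x <;> cases s <;> simp <;> omega

lemma wk_stable (s : Bool) (L : List Bool) {i : ℕ} (h : L.length ≤ i) :
    wk s L i = wk s L L.length := by
  simp [wk, List.take_of_length_le h, List.take_length]

lemma wk_not (s : Bool) (L : List Bool) (j : ℕ) : wk (!s) L j = - wk s L j := by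
  simp [wk, Bool.not_not]

lemma count_map_not (s : Bool) (L : List Bool) : (L.map (!·)).count s = L.count (!s) := by
  induction L with
  | nil => simp
  | cons x t ih => cases x <;> cases s <;> simp [List.count_cons, ih]

lemma take_refl' (L : List Bool) {i j : ℕ} (hij : i ≤ j) (hj : j ≤ L.length) :
    (refl' L j).take i = (L.take i).map (!·) := by
  have hlen : ((L.take j).map (!·)).length = j := by
    simp [List.length_take, Nat.min_eq_left hj]
  rw [refl', List.take_append_of_le_length (by omega)]
  rw [← List.map_take, List.take_take, Nat.min_eq_left hij]

lemma drop_refl' (L : List Bool) {j : ℕ} (hj : j ≤ L.length) :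
    (refl' L j).drop j = L.drop j := by
  have hlen : ((L.take j).map (!·)).length = j := by
    simp [List.length_take, Nat.min_eq_left hj]
  rw [refl', List.drop_append_of_le_length (le_of_eq hlen.symm)]
  simp [hlen]

lemma wk_refl' (s : Bool) (L : List Bool) {i j : ℕ} (hij : i ≤ j) (hj : j ≤ L.length) :
    wk s (refl' L j) i = wk (!s) L i := by
  rw [wk, wk, take_refl' L hij hj, count_map_not, count_map_not, Bool.not_not]

lemma refl'_refl' (L : List Bool) {j : ℕ} (hj : j ≤ L.length) :
    refl' (refl' L j) j = L := by
  conv_rhs => rw [← List.take_append_drop j L]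
  rw [refl', take_refl' L le_rfl hj, drop_refl' L hj, List.map_map]
  congr 1
  simp [Function.comp_def]

lemma count_refl' (s : Bool) (L : List Bool) (j : ℕ) :
    ((refl' L j).count s : ℤ) = (L.count s : ℤ) - wk s L j := by
  have h1 : L.count s = (L.take j).count s + (L.drop j).count s := by
    conv_lhs => rw [← List.take_append_drop j L]
    rw [List.count_append]
  simp only [refl', List.count_append, count_map_not, wk, h1]
  push_cast
  ring

lemma hit (s : Bool) (L : List Bool) {c : ℤ} (hc : 1 ≤ c) (h : ∃ j, c ≤ wk s L j) :
    wk s L (Nat.find h) = c ∧ Nat.find h ≤ L.length ∧ ∀ i < Nat.find h, wk s L i < c := by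
  set j := Nat.find h with hjdef
  have hspec : c ≤ wk s L j := Nat.find_spec h
  have hmin : ∀ i < j, wk s L i < c := by
    intro i hi
    have := Nat.find_min h hi
    omega
  have hj0 : j ≠ 0 := by
    intro h0
    rw [h0] at hspec
    simp at hspec
    omega
  have heq : wk s L j = c := by
    have h1 : wk s L (j-1) < c := hmin _ (by omega)
    have h2 : wk s L j ≤ wk s L (j-1) + 1 := by
      have hj1 : j - 1 + 1 = j := by omega
      rw [← hj1]
      exact wk_succ_le s L (j-1)
    omega
  refine ⟨heq, ?_, hmin⟩
  by_contra hlen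
  push_neg at hlen
  have := wk_stable s L (le_of_lt hlen)
  have := Nat.find_min h hlen
  omega

lemma refl_mem (s : Bool) (L : List Bool) {d : ℤ} (hd : 1 ≤ d) (h : ∃ j, d ≤ wk s L j) :
    ((refl' L (Nat.find h)).count s : ℤ) = (L.count s : ℤ) - d ∧
    ((refl' L (Nat.find h)).count (!s) : ℤ) = (L.count (!s) : ℤ) + d ∧
    d ≤ wk (!s) (refl' L (Nat.find h)) (Nat.find h) := by
  obtain ⟨hw, hlen, hmin⟩ := hit s L hd h
  refine ⟨?_, ?_, ?_⟩
  · rw [count_refl', hw]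
  · rw [count_refl', wk_not, hw]; ring
  · rw [wk_refl' (!s) L le_rfl hlen, Bool.not_not, hw]

lemma inv_key (s : Bool) (L : List Bool) {d : ℤ} (hd : 1 ≤ d) (h : ∃ j, d ≤ wk s L j)
    (h' : ∃ j, d ≤ wk (!s) (refl' L (Nat.find h)) j) :
    refl' (refl' L (Nat.find h)) (Nat.find h') = L := by
  obtain ⟨hw, hlen, hmin⟩ := hit s L hd h
  have hfind : Nat.find h' = Nat.find h := by
    rw [Nat.find_eq_iff]
    constructor
    · rw [wk_refl' (!s) L le_rfl hlen, Bool.not_not, hw]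
    · intro m hm
      rw [wk_refl' (!s) L (le_of_lt hm) hlen, Bool.not_not]
      have := hmin m hm
      omega
  rw [hfind]
  exact refl'_refl' L hlen

/-! ### The reflection bijection -/

def AA (a b d : ℕ) :=
  {L : List Bool // L.count true = a ∧ L.count false = b ∧ ∃ j, (d:ℤ) ≤ wk false L j}

noncomputable def reflEquiv (a b d : ℕ) (hd : 1 ≤ d) (hbd : d ≤ b) (hab : b ≤ a + d) :
    AA a b d ≃ TT (a + d) (b - d) where
  toFun := fun L =>
    ⟨refl' L.1 (Nat.find L.2.2.2), by
      obtain ⟨c1, c2, c3⟩ := refl_mem false L.1 (by exact_mod_cast hd) L.2.2.2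
      have h1 := L.2.1
      have h2 := L.2.2.1
      simp only [Bool.not_false] at c2
      constructor <;> omega⟩
  invFun := fun M =>
    have hex : ∃ j, (d:ℤ) ≤ wk true M.1 j := by
      refine ⟨M.1.length, ?_⟩
      have h1 := M.2.1
      have h2 := M.2.2
      rw [wk, List.take_length]
      simp only [Bool.not_true]
      omega
    ⟨refl' M.1 (Nat.find hex), by
      obtain ⟨c1, c2, c3⟩ := refl_mem true M.1 (by exact_mod_cast hd) hex
      have h1 := M.2.1
      have h2 := M.2.2
      simp only [Bool.not_true] at c2 c3
      refine ⟨by omega, by omega, ⟨Nat.find hex, c3⟩⟩⟩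
  left_inv := by
    rintro ⟨L, h1, h2, h3⟩
    apply Subtype.ext
    obtain ⟨c1, c2, c3⟩ := refl_mem false L (by exact_mod_cast hd) h3
    exact inv_key false L (by exact_mod_cast hd) h3 ⟨Nat.find h3, c3⟩
  right_inv := by
    rintro ⟨M, hM⟩
    apply Subtype.ext
    have hex : ∃ j, (d:ℤ) ≤ wk true M j := by
      refine ⟨M.length, ?_⟩
      have h1 := hM.1
      have h2 := hM.2
      rw [wk, List.take_length]
      simp only [Bool.not_true]
      omega
    obtain ⟨c1, c2, c3⟩ := refl_mem true M (by exact_mod_cast hd) hex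
    exact inv_key true M (by exact_mod_cast hd) hex ⟨Nat.find hex, c3⟩

end Stmt1Aux

open Stmt1Aux

theorem stmt_1 (x1 y1 x2 y2 : ℤ) (hx : x1 ≤ x2) (hy : y1 ≤ y2)
    (h1 : x1 ≤ y1) (h2 : x2 ≤ y2) :
    Nat.card {L : List Bool // IsNEWalk x1 y1 x2 y2 L ∧ GoesBelow x1 y1 L} =
      ibinom ((y2 - y1) + (x2 - x1)) ((x2 - x1) - (y1 - x1) - 1) := by
  set a := (y2 - y1).toNat with ha
  set b := (x2 - x1).toNat with hb
  set δ := (y1 - x1).toNat with hδ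
  set d := δ + 1 with hdd
  have haa : (a : ℤ) = y2 - y1 := by omega
  have hbb : (b : ℤ) = x2 - x1 := by omega
  have hδδ : (δ : ℤ) = y1 - x1 := by omega
  -- the subtype in the statement is equivalent to `AA a b d`
  have key : ∀ L : List Bool, (IsNEWalk x1 y1 x2 y2 L ∧ GoesBelow x1 y1 L) ↔
      (L.count true = a ∧ L.count false = b ∧ ∃ j, (d:ℤ) ≤ wk false L j) := by
    intro L
    constructor
    · rintro ⟨⟨w1, w2⟩, j, hj⟩
      refine ⟨by omega, by omega, j, ?_⟩
      rw [wk]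
      simp only [Bool.not_false]
      push_cast
      omega
    · rintro ⟨w1, w2, j, hj⟩
      rw [wk] at hj
      simp only [Bool.not_false] at hj
      exact ⟨⟨by omega, by omega⟩, j, by push_cast at hj ⊢; omega⟩
  have hequiv : {L : List Bool // IsNEWalk x1 y1 x2 y2 L ∧ GoesBelow x1 y1 L} ≃ AA a b d :=
    Equiv.subtypeEquivRight key
  rw [Nat.card_congr hequiv]
  by_cases hcase : d ≤ b
  · -- main case: reflection
    have hab : b ≤ a + d := by omega
    rw [Nat.card_congr (reflEquiv a b d (by omega) hcase hab), card_TT]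
    have hr : (0:ℤ) ≤ (x2 - x1) - (y1 - x1) - 1 := by omega
    rw [ibinom, if_pos hr]
    congr 1 <;> omega
  · -- degenerate case: no path goes below the diagonal
    have : IsEmpty (AA a b d) := by
      constructor
      rintro ⟨L, w1, w2, j, hj⟩
      rw [wk] at hj
      simp only [Bool.not_false] at hj
      have hsub : (L.take j).count false ≤ L.count false :=
        (List.take_sublist j L).count_le false
      omega
    rw [Nat.card_of_isEmpty]
    rw [ibinom, if_neg (by omega)]
end

section
/- There is a bijection between lattice paths from (x1,y1) to (x2,y2) with North and East steps that visit a point strictly below the diagonal y=x, and all lattice paths from (x1,y1) to (x1+α+δ+1, y1+β−δ−1) with North and East steps, where δ = y1−x1, α = y2−y1, β = x2−x1. -/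
namespace Stmt2Aux

/-- running "excess of East over North" after `j` steps -/
def diff (L : List Bool) (j : ℕ) : ℤ :=
  ((L.take j).count false : ℤ) - ((L.take j).count true : ℤ)

-- reflect (swap N/E) after the first moment the running diff equals `c`.
open Classical in
noncomputable def fc (c : ℤ) (L : List Bool) : List Bool :=
  if h : ∃ j, diff L j = c then
    L.take (Nat.find h) ++ (L.drop (Nat.find h)).map (!·)
  else L

variable {c : ℤ} {L : List Bool}

lemma count_map_not_true (M : List Bool) : (M.map (!·)).count true = M.count false := by
  induction M with
  | nil => simp
  | cons b M ih => cases b <;> simp [List.count_cons, ih]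

lemma count_map_not_false (M : List Bool) : (M.map (!·)).count false = M.count true := by
  induction M with
  | nil => simp
  | cons b M ih => cases b <;> simp [List.count_cons, ih]

lemma diff_zero (L : List Bool) : diff L 0 = 0 := by simp [diff]

lemma diff_step (L : List Bool) (i : ℕ) : diff L (i+1) ≤ diff L i + 1 := by
  rw [diff, diff, List.take_succ]
  have h1 : (L.take i ++ L[i]?.toList).count false ≤ (L.take i).count false + 1 := by
    rw [List.count_append]
    have : L[i]?.toList.count false ≤ L[i]?.toList.length := List.count_le_length
    have : L[i]?.toList.length ≤ 1 := by cases h : L[i]? <;> simp [h]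
    omega
  have h2 : (L.take i).count true ≤ (L.take i ++ L[i]?.toList).count true := by
    rw [List.count_append]; omega
  omega

lemma ivt (L : List Bool) (c : ℤ) (hc : 0 ≤ c) (n : ℕ) (hn : c ≤ diff L n) :
    ∃ j, diff L j = c := by
  induction n with
  | zero => exact ⟨0, by have := diff_zero L; omega⟩
  | succ n ih =>
    by_cases h : c ≤ diff L n
    · exact ih h
    · exact ⟨n+1, by have := diff_step L n; omega⟩

lemma find_le_length (h : ∃ j, diff L j = c) : Nat.find h ≤ L.length := by
  by_contra hlt
  push_neg at hlt
  have hP : diff L L.length = c := by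
    have := Nat.find_spec h
    rwa [diff, List.take_of_length_le (le_of_lt hlt), ← List.take_length (l := L)] at this
  exact absurd (Nat.find_min' h hP) (by omega)

lemma len_take (h : ∃ j, diff L j = c) : (L.take (Nat.find h)).length = Nat.find h := by
  rw [List.length_take]; exact min_eq_left (find_le_length h)

lemma take_fc (h : ∃ j, diff L j = c) :
    (fc c L).take (Nat.find h) = L.take (Nat.find h) := by
  rw [fc, dif_pos h]
  rw [List.take_append_of_le_length (le_of_eq (len_take h).symm), List.take_take, min_self]

lemma drop_fc (h : ∃ j, diff L j = c) :
    (fc c L).drop (Nat.find h) = (L.drop (Nat.find h)).map (!·) := by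
  rw [fc, dif_pos h]
  rw [List.drop_append_of_le_length (le_of_eq (len_take h).symm)]
  simp [len_take h]

lemma take_fc_of_le (h : ∃ j, diff L j = c) {i : ℕ} (hi : i ≤ Nat.find h) :
    (fc c L).take i = L.take i := by
  have : (fc c L).take i = ((fc c L).take (Nat.find h)).take i := by
    rw [List.take_take, min_eq_left hi]
  rw [this, take_fc h, List.take_take, min_eq_left hi]

lemma diff_fc_of_le (h : ∃ j, diff L j = c) {i : ℕ} (hi : i ≤ Nat.find h) :
    diff (fc c L) i = diff L i := by
  rw [diff, diff, take_fc_of_le h hi]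

lemma cross_fc (h : ∃ j, diff L j = c) : ∃ j, diff (fc c L) j = c :=
  ⟨Nat.find h, by rw [diff_fc_of_le h le_rfl]; exact Nat.find_spec h⟩

lemma find_fc (h : ∃ j, diff L j = c) : Nat.find (cross_fc h) = Nat.find h := by
  apply le_antisymm
  · exact Nat.find_min' _ (by rw [diff_fc_of_le h le_rfl]; exact Nat.find_spec h)
  · by_contra hlt
    push_neg at hlt
    have h1 := Nat.find_spec (cross_fc h)
    rw [diff_fc_of_le h (le_of_lt hlt)] at h1
    exact Nat.find_min h hlt h1

lemma count_true_fc (h : ∃ j, diff L j = c) :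
    ((fc c L).count true : ℤ) = (L.count false : ℤ) - c := by
  have hd := Nat.find_spec h
  rw [diff] at hd
  have hsplit : (L.take (Nat.find h)).count false + (L.drop (Nat.find h)).count false
      = L.count false := by rw [← List.count_append, List.take_append_drop]
  have heq : (fc c L).count true
      = (L.take (Nat.find h)).count true + (L.drop (Nat.find h)).count false := by
    rw [fc, dif_pos h, List.count_append, count_map_not_true]
  rw [heq]
  push_cast
  omega

lemma count_false_fc (h : ∃ j, diff L j = c) :
    ((fc c L).count false : ℤ) = (L.count true : ℤ) + c := by
  have hd := Nat.find_spec h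
  rw [diff] at hd
  have hsplit : (L.take (Nat.find h)).count true + (L.drop (Nat.find h)).count true
      = L.count true := by rw [← List.count_append, List.take_append_drop]
  have heq : (fc c L).count false
      = (L.take (Nat.find h)).count false + (L.drop (Nat.find h)).count true := by
    rw [fc, dif_pos h, List.count_append, count_map_not_false]
  rw [heq]
  push_cast
  omega

lemma fc_fc (h : ∃ j, diff L j = c) : fc c (fc c L) = L := by
  have h' := cross_fc h
  rw [fc, dif_pos h', find_fc h, take_fc h, drop_fc h]
  rw [List.map_map]
  have hid : ((!·) ∘ (!·)) = id := by funext b; simp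
  rw [hid, List.map_id, List.take_append_drop]

end Stmt2Aux

open Stmt2Aux in
/-- There is a bijection between the N/E lattice paths from `(x1,y1)` to `(x2,y2)`
that visit a point strictly below the diagonal `y = x`, and all N/E lattice paths
from `(x1,y1)` to `(x1+α+δ+1, y1+β−δ−1)`, where `δ = y1−x1`, `α = y2−y1`, `β = x2−x1`. -/
theorem stmt_2 (x1 y1 x2 y2 : ℤ) (hx : x1 ≤ x2) (hy : y1 ≤ y2)
    (h1 : x1 ≤ y1) (h2 : x2 ≤ y2) :
    Nonempty
      ({L : List Bool // IsNEWalk x1 y1 x2 y2 L ∧ GoesBelow x1 y1 L} ≃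
       {L : List Bool //
          IsNEWalk x1 y1 (x1 + (y2 - y1) + (y1 - x1) + 1)
            (y1 + (x2 - x1) - (y1 - x1) - 1) L}) := by
  set c : ℤ := y1 - x1 + 1 with hc
  by_cases hb : x2 ≤ y1
  · -- degenerate case: both sides empty
    haveI hEL : IsEmpty {L : List Bool // IsNEWalk x1 y1 x2 y2 L ∧ GoesBelow x1 y1 L} := by
      constructor
      rintro ⟨L, ⟨hT, hF⟩, j, hj⟩
      have hle : (L.take j).count false ≤ L.count false :=
        (List.take_sublist j L).count_le _
      have h0 : (0:ℤ) ≤ ((L.take j).count true : ℤ) := Int.natCast_nonneg _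
      have hle' : ((L.take j).count false : ℤ) ≤ (L.count false : ℤ) := by exact_mod_cast hle
      omega
    haveI hER : IsEmpty {L : List Bool //
        IsNEWalk x1 y1 (x1 + (y2 - y1) + (y1 - x1) + 1)
          (y1 + (x2 - x1) - (y1 - x1) - 1) L} := by
      constructor
      rintro ⟨L, hT, hF⟩
      have h0 : (0:ℤ) ≤ (L.count true : ℤ) := Int.natCast_nonneg _
      omega
    exact ⟨Equiv.equivOfIsEmpty _ _⟩
  · push_neg at hb
    -- main case: reflection bijection
    have key : ∀ L : List Bool, GoesBelow x1 y1 L → ∃ j, diff L j = c := by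
      rintro L ⟨j, hj⟩
      exact ivt L c (by omega) j (by rw [diff]; omega)
    have keyR : ∀ L : List Bool,
        IsNEWalk x1 y1 (x1 + (y2 - y1) + (y1 - x1) + 1)
          (y1 + (x2 - x1) - (y1 - x1) - 1) L → ∃ j, diff L j = c := by
      rintro L ⟨hT, hF⟩
      refine ivt L c (by omega) L.length ?_
      rw [diff, List.take_length]
      omega
    refine ⟨{
      toFun := fun L => ⟨fc c L.1, ?_, ?_⟩
      invFun := fun M => ⟨fc c M.1, ⟨?_, ?_⟩, ?_⟩
      left_inv := fun L => Subtype.ext (fc_fc (key L.1 L.2.2))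
      right_inv := fun M => Subtype.ext (fc_fc (keyR M.1 M.2)) }⟩
    · rw [count_true_fc (key L.1 L.2.2)]
      have := L.2.1.2
      omega
    · rw [count_false_fc (key L.1 L.2.2)]
      have := L.2.1.1
      omega
    · rw [count_true_fc (keyR M.1 M.2)]
      have := M.2.2
      omega
    · rw [count_false_fc (keyR M.1 M.2)]
      have := M.2.1
      omega
    · have h := keyR M.1 M.2
      refine ⟨Nat.find h, ?_⟩
      have hd : diff (fc c M.1) (Nat.find h) = c := by
        rw [diff_fc_of_le h le_rfl]; exact Nat.find_spec h
      rw [diff] at hd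
      omega
end

section
/- For non-negative integers k and l with l ≤ k, the difference (sum over d' from 0 to l−1 of C(k,d')·C(k+1,k−d')) − (sum over d' from 0 to l−1 of C(k+1,d')·C(k,k−d')) equals C(k,l−1)·C(k,k−l). -/
theorem ibinom_natCast_succ_sub_one (n r : ℕ) : ibinom n ((r + 1 : ℕ) - 1) = n.choose r := by
  simp [ibinom]

theorem choose_succ_eq_ibinom_sub_one_add (n r : ℕ) :
    ((n + 1).choose r : ℤ) = ibinom n ((r : ℤ) - 1) + n.choose r := by
  cases r with
  | zero => simp [ibinom]
  | succ r =>
    rw [Nat.choose_succ_succ', ibinom_natCast_succ_sub_one]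
    push_cast
    rfl

theorem choose_mul_choose_succ_sub_choose_succ_mul_choose (n d m : ℕ) :
    (n.choose d : ℤ) * (n + 1).choose m - (n + 1).choose d * n.choose m
      = n.choose d * ibinom n ((m : ℤ) - 1) - ibinom n ((d : ℤ) - 1) * n.choose m := by
  rw [choose_succ_eq_ibinom_sub_one_add n m, choose_succ_eq_ibinom_sub_one_add n d]
  ring

theorem stmt_11 (k l : ℕ) (hl : l ≤ k) :
    (∑ d' ∈ Finset.range l, (k.choose d' : ℤ) * (k + 1).choose (k - d'))
      - (∑ d' ∈ Finset.range l, ((k + 1).choose d' : ℤ) * k.choose (k - d'))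
      = (ibinom k ((l : ℤ) - 1) : ℤ) * k.choose (k - l) := by
  set g : ℕ → ℤ := fun d => ibinom k ((d : ℤ) - 1) * k.choose (k - d)
  have htelescope : ∀ d ∈ Finset.range l,
      (k.choose d : ℤ) * (k + 1).choose (k - d) - (k + 1).choose d * k.choose (k - d)
        = g (d + 1) - g d := by
    intro d hd
    have hkd : k - d = (k - (d + 1)) + 1 := by
      have := Finset.mem_range.mp hd
      omega
    rw [choose_mul_choose_succ_sub_choose_succ_mul_choose]
    simp only [g]
    rw [ibinom_natCast_succ_sub_one, hkd, ibinom_natCast_succ_sub_one, ← hkd]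
  rw [← Finset.sum_sub_distrib, Finset.sum_congr rfl htelescope, Finset.sum_range_sub]
  simp [g, ibinom]
end

section
/- For any permutation π of ℤ/nℤ and k ≤ n with g = gcd(n,k), the wreath generated by π, i.e., the set of sets {π((i−1)k+1), ..., π(ik)} for i ∈ ℤ/nℤ, has exactly n/g elements. -/
/-- The wreath generated by a permutation `π` of `ℤ/nℤ`: the collection of
sets `{π((i−1)k+1), π((i−1)k+2), …, π(ik)}` for `i ∈ ℤ/nℤ`. -/
def wreath (n k : ℕ) [NeZero n] (π : Equiv.Perm (ZMod n)) :
    Finset (Finset (ZMod n)) :=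
  Finset.image
    (fun i : ZMod n =>
      Finset.image (fun t : Fin k => π ((i - 1) * (k : ZMod n) + ((t : ℕ) + 1 : ℕ)))
        Finset.univ)
    Finset.univ

lemma card_image_mul_aux (n k : ℕ) [NeZero n] :
    (Finset.image (fun i : ZMod n => i * (k : ZMod n)) Finset.univ).card
      = n / Nat.gcd n k := by
  have hset : Set.range (fun i : ZMod n => i * (k : ZMod n))
      = (AddSubgroup.zmultiples ((k : ZMod n)) : Set (ZMod n)) := by
    ext x
    simp only [Set.mem_range, SetLike.mem_coe, AddSubgroup.mem_zmultiples_iff]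
    constructor
    · rintro ⟨i, rfl⟩
      refine ⟨(i.val : ℤ), ?_⟩
      rw [zsmul_eq_mul]
      push_cast [ZMod.natCast_val, ZMod.cast_id]
      ring
    · rintro ⟨z, rfl⟩
      exact ⟨(z : ZMod n), by rw [zsmul_eq_mul]⟩
  calc (Finset.image (fun i : ZMod n => i * (k : ZMod n)) Finset.univ).card
      = (Set.range (fun i : ZMod n => i * (k : ZMod n))).ncard := by
        rw [← Set.ncard_coe_finset]; congr 1; simp
    _ = Nat.card (AddSubgroup.zmultiples ((k : ZMod n))) := by
        rw [hset, ← Nat.card_coe_set_eq]; rfl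
    _ = n / Nat.gcd n k := by
        rw [Nat.card_zmultiples, ZMod.addOrderOf_coe k (NeZero.ne n)]

/-- For any permutation `π` of `ℤ/nℤ` and `k ≤ n`, the wreath generated by `π`
has exactly `n / gcd(n,k)` elements. -/
theorem stmt_16 (n k : ℕ) [NeZero n] (hk : k ≤ n) (hk0 : 0 < k)
    (π : Equiv.Perm (ZMod n)) :
    (wreath n k π).card = n / Nat.gcd n k := by
  rcases eq_or_lt_of_le hk with rfl | hkn
  · -- k = n
    unfold wreath
    have hfun : (fun i : ZMod k =>
        Finset.image (fun t : Fin k => π ((i - 1) * (k : ZMod k) + ((t : ℕ) + 1 : ℕ)))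
          Finset.univ)
        = fun _ : ZMod k =>
            Finset.image (fun t : Fin k => π (((t : ℕ) + 1 : ℕ))) Finset.univ := by
      funext i
      simp [ZMod.natCast_self]
    rw [hfun, Finset.image_const Finset.univ_nonempty]
    simp [Nat.gcd_self, Nat.div_self hk0]
  · -- k < n
    set A : ZMod n → Finset (ZMod n) :=
      fun c => Finset.image (fun s : Fin k => c - ((s : ℕ) : ZMod n)) Finset.univ with hA
    have hπ : Function.Injective π := π.injective
    have hblock : ∀ i : ZMod n,
        Finset.image (fun t : Fin k => π ((i - 1) * (k : ZMod n) + ((t : ℕ) + 1 : ℕ)))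
          Finset.univ = Finset.image π (A (i * k)) := by
      intro i
      rw [hA, Finset.image_image]
      ext x
      simp only [Finset.mem_image, Finset.mem_univ, true_and, Function.comp]
      constructor
      · rintro ⟨t, rfl⟩
        have ht : (t : ℕ) < k := t.2
        refine ⟨⟨k - 1 - (t : ℕ), by omega⟩, ?_⟩
        congr 1
        simp only [Fin.val_mk]
        have h1 : (k - 1 - (t : ℕ) : ℕ) = k - ((t : ℕ) + 1) := by omega
        rw [h1, Nat.cast_sub (by omega : (t : ℕ) + 1 ≤ k)]
        push_cast
        ring
      · rintro ⟨s, rfl⟩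
        have hs : (s : ℕ) < k := s.2
        refine ⟨⟨k - 1 - (s : ℕ), by omega⟩, ?_⟩
        congr 1
        simp only [Fin.val_mk]
        have h1 : (k - 1 - (s : ℕ) + 1 : ℕ) = k - (s : ℕ) := by omega
        rw [h1, Nat.cast_sub (le_of_lt hs)]
        ring
    have hAinj : Function.Injective A := by
      intro c d h
      have hc : c ∈ A d := by
        rw [← h, hA]
        exact Finset.mem_image.2 ⟨⟨0, hk0⟩, Finset.mem_univ _, by simp⟩
      rw [hA] at hc
      obtain ⟨s, -, hs⟩ := Finset.mem_image.1 hc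
      rcases Nat.eq_zero_or_pos (s : ℕ) with h0 | hpos
      · rw [h0] at hs
        simpa using hs.symm
      · exfalso
        have hc1 : c + 1 ∈ A d := by
          rw [hA]
          refine Finset.mem_image.2 ⟨⟨(s : ℕ) - 1, by omega⟩, Finset.mem_univ _, ?_⟩
          simp only [Fin.val_mk]
          have h1 : (((s : ℕ) - 1 : ℕ) : ZMod n) = ((s : ℕ) : ZMod n) - 1 := by
            rw [Nat.cast_sub hpos]
            push_cast
            ring
          rw [h1, ← hs]
          ring
        rw [← h, hA] at hc1
        obtain ⟨s', -, hs'⟩ := Finset.mem_image.1 hc1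
        have hzero : (((s' : ℕ) + 1 : ℕ) : ZMod n) = 0 := by
          push_cast
          linear_combination -hs'
        have hdvd : n ∣ (s' : ℕ) + 1 := (ZMod.natCast_eq_zero_iff _ n).1 hzero
        have hlt : (s' : ℕ) + 1 < n := by have := s'.2; omega
        have := Nat.le_of_dvd (by omega) hdvd
        omega
    have hrw : wreath n k π
        = Finset.image (fun c => Finset.image π (A c))
            (Finset.image (fun i : ZMod n => i * (k : ZMod n)) Finset.univ) := by
      rw [Finset.image_image]
      unfold wreath
      apply Finset.image_congr
      intro i _
      exact hblock i
    have hinj : Function.Injective (fun c => Finset.image π (A c)) := by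
      intro c d hcd
      exact hAinj (Finset.image_injective hπ hcd)
    rw [hrw, Finset.card_image_of_injective _ hinj, card_image_mul_aux]
end
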